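/- arXiv:1611.05096 — 3 statements merged into one kernel-verified Lean document; each statement's English description precedes it below -/
import Mathlib

section
/- Let U, ν, γ, C_k, ε₀ be strictly positive real numbers and set β₁ = 2C_kγ/(3ε₀^{1/3}) and β₂ = 3C_kν/(2ε₀^{1/3}). Define E : ℝ → ℝ by E(k) = (1/2)U² · e^{β₂} · k^{-(5/3+β₁)} · exp(-β₂ k^{4/3}) (real powers). Then E(1) = (1/2)U², and for every k > 0 the function k ↦ C_k^{-1} ε₀^{1/3} k^{5/3} E(k) has derivative at k equal to -(2ν k² + (2/3)γ k^{2/3}) · E(k). In other words, E solves the long-time-averaged Pao energy-transfer equation d/dk (C_k^{-1} ε₀^{1/3} k^{5/3} E(k)) + (2ν k² + 2αγ k^{2α}) E(k) = 0 with fractional exponent α = 1/3 and boundary condition E(1) = U²/2. -/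
/-- For the fractional-Laplacian closure with exponent α = 1/3, the spectrum
E(k) = (1/2)U² e^{β₂} k^{-(5/3+β₁)} exp(-β₂ k^{4/3}) satisfies E(1) = U²/2 and solves
d/dk (C_k⁻¹ ε₀^{1/3} k^{5/3} E(k)) + (2ν k² + (2/3)γ k^{2/3}) E(k) = 0 for k > 0. -/
theorem pao_spectrum_alpha_third (U ν γ Ck ε₀ : ℝ)
    (hU : 0 < U) (hν : 0 < ν) (hγ : 0 < γ) (hCk : 0 < Ck) (hε : 0 < ε₀)
    (β₁ β₂ : ℝ)
    (hβ₁ : β₁ = 2 * Ck * γ / (3 * ε₀ ^ ((1:ℝ)/3)))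
    (hβ₂ : β₂ = 3 * Ck * ν / (2 * ε₀ ^ ((1:ℝ)/3)))
    (E : ℝ → ℝ)
    (hE : ∀ k : ℝ, E k =
      (1/2) * U^2 * Real.exp β₂ * k ^ (-(5/3 + β₁)) * Real.exp (-β₂ * k ^ ((4:ℝ)/3))) :
    E 1 = (1/2) * U^2 ∧
    ∀ k : ℝ, 0 < k →
      HasDerivAt (fun k : ℝ => Ck⁻¹ * ε₀ ^ ((1:ℝ)/3) * k ^ ((5:ℝ)/3) * E k)
        (-(2 * ν * k^2 + (2/3) * γ * k ^ ((2:ℝ)/3)) * E k) k := by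
  have hε3 : (0:ℝ) < ε₀ ^ ((1:ℝ)/3) := Real.rpow_pos_of_pos hε _
  constructor
  · rw [hE]
    simp only [Real.one_rpow, mul_one, Real.rpow_one]
    rw [Real.exp_neg]
    field_simp
  · intro k hk
    have hk0 : k ≠ 0 := ne_of_gt hk
    set A : ℝ := Ck⁻¹ * ε₀ ^ ((1:ℝ)/3) * ((1/2) * U^2 * Real.exp β₂) with hA
    have h1 : HasDerivAt (fun x : ℝ => x ^ (-β₁)) (-β₁ * k ^ (-β₁ - 1)) k :=
      Real.hasDerivAt_rpow_const (Or.inl hk0)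
    have h2 : HasDerivAt (fun x : ℝ => x ^ ((4:ℝ)/3)) ((4:ℝ)/3 * k ^ ((4:ℝ)/3 - 1)) k :=
      Real.hasDerivAt_rpow_const (Or.inl hk0)
    have h3 : HasDerivAt (fun x : ℝ => -β₂ * x ^ ((4:ℝ)/3))
        (-β₂ * ((4:ℝ)/3 * k ^ ((4:ℝ)/3 - 1))) k := h2.const_mul _
    have hg : HasDerivAt (fun x : ℝ => A * (x ^ (-β₁) * Real.exp (-β₂ * x ^ ((4:ℝ)/3))))
        (A * ((-β₁ * k ^ (-β₁ - 1)) * Real.exp (-β₂ * k ^ ((4:ℝ)/3))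
          + k ^ (-β₁) * (Real.exp (-β₂ * k ^ ((4:ℝ)/3)) * (-β₂ * ((4:ℝ)/3 * k ^ ((4:ℝ)/3 - 1)))))) k :=
      (h1.mul h3.exp).const_mul A
    have heq : (fun x : ℝ => Ck⁻¹ * ε₀ ^ ((1:ℝ)/3) * x ^ ((5:ℝ)/3) * E x)
        =ᶠ[nhds k] (fun x : ℝ => A * (x ^ (-β₁) * Real.exp (-β₂ * x ^ ((4:ℝ)/3)))) := by
      filter_upwards [eventually_gt_nhds hk] with x hx
      rw [hE]
      have hxr : x ^ ((5:ℝ)/3) * x ^ (-(5/3 + β₁)) = x ^ (-β₁) := by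
        rw [← Real.rpow_add hx]; ring_nf
      calc Ck⁻¹ * ε₀ ^ ((1:ℝ)/3) * x ^ ((5:ℝ)/3) *
            ((1/2) * U^2 * Real.exp β₂ * x ^ (-(5/3 + β₁)) * Real.exp (-β₂ * x ^ ((4:ℝ)/3)))
          = A * ((x ^ ((5:ℝ)/3) * x ^ (-(5/3 + β₁))) * Real.exp (-β₂ * x ^ ((4:ℝ)/3))) := by
            rw [hA]; ring
        _ = A * (x ^ (-β₁) * Real.exp (-β₂ * x ^ ((4:ℝ)/3))) := by rw [hxr]
    have hmain := hg.congr_of_eventuallyEq heq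
    refine hmain.congr_deriv (Eq.symm ?_)
    rw [hE, hA]
    have e1 : k ^ (-β₁ - 1) = k ^ (-(5/3 + β₁)) * k ^ ((2:ℝ)/3) := by
      rw [← Real.rpow_add hk]; ring_nf
    have e3 : k ^ (-β₁) = k ^ (-(5/3 + β₁)) * k ^ ((5:ℝ)/3) := by
      rw [← Real.rpow_add hk]; ring_nf
    have e4 : k ^ ((4:ℝ)/3 - 1) = k ^ ((1:ℝ)/3) := by norm_num
    have e5 : k ^ ((5:ℝ)/3) * k ^ ((1:ℝ)/3) = k ^ 2 := by
      rw [← Real.rpow_add hk, ← Real.rpow_natCast k 2]; norm_num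
    have hb1 : β₁ * (Ck⁻¹ * ε₀ ^ ((1:ℝ)/3)) = 2/3 * γ := by
      rw [hβ₁]; field_simp
    have hb2 : β₂ * (Ck⁻¹ * ε₀ ^ ((1:ℝ)/3)) = 3/2 * ν := by
      rw [hβ₂]; field_simp
    rw [e1, e3, e4]
    linear_combination ((1/2) * U^2 * Real.exp β₂ * k ^ (-(5/3 + β₁)) *
        Real.exp (-β₂ * k ^ ((4:ℝ)/3))) *
      ((k ^ ((2:ℝ)/3)) * hb1 + (4/3) * (k ^ ((5:ℝ)/3) * k ^ ((1:ℝ)/3)) * hb2 + 2 * ν * e5)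
end

section
/- Let U, ν, γ, C_k, ε₀ be strictly positive real numbers and let α ∈ (0,1) with α ≠ 1/3. Set β₂ = 3C_kν/(2ε₀^{1/3}), β₄ = 2αC_kγ/((2α - 2/3)ε₀^{1/3}), and β₃ = β₂ + β₄. Define E : ℝ → ℝ by E(k) = (1/2)U² · e^{β₃} · k^{-5/3} · exp(-β₂ k^{4/3}) · exp(-β₄ k^{2α-2/3}) (real powers). Then E(1) = (1/2)U², and for every k > 0 the function k ↦ C_k^{-1} ε₀^{1/3} k^{5/3} E(k) has derivative at k equal to -(2ν k² + 2αγ k^{2α}) · E(k). In other words, E solves the long-time-averaged Pao energy-transfer equation with exponent α and boundary condition E(1) = U²/2. -/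
/-- For the fractional-Laplacian closure with exponent α ∈ (0,1), α ≠ 1/3, the spectrum
E(k) = (1/2)U² e^{β₃} k^{-5/3} exp(-β₂ k^{4/3}) exp(-β₄ k^{2α-2/3}) satisfies E(1) = U²/2
and solves d/dk (C_k⁻¹ ε₀^{1/3} k^{5/3} E(k)) + (2ν k² + 2αγ k^{2α}) E(k) = 0 for k > 0. -/
theorem pao_spectrum_general_alpha (U ν γ Ck ε₀ α : ℝ)
    (hU : 0 < U) (hν : 0 < ν) (hγ : 0 < γ) (hCk : 0 < Ck) (hε : 0 < ε₀)
    (hα0 : 0 < α) (hα1 : α < 1) (hα3 : α ≠ 1/3)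
    (β₂ β₄ β₃ : ℝ)
    (hβ₂ : β₂ = 3 * Ck * ν / (2 * ε₀ ^ ((1:ℝ)/3)))
    (hβ₄ : β₄ = 2 * α * Ck * γ / ((2 * α - 2/3) * ε₀ ^ ((1:ℝ)/3)))
    (hβ₃ : β₃ = β₂ + β₄)
    (E : ℝ → ℝ)
    (hE : ∀ k : ℝ, E k =
      (1/2) * U^2 * Real.exp β₃ * k ^ (-(5:ℝ)/3) * Real.exp (-β₂ * k ^ ((4:ℝ)/3)) *
        Real.exp (-β₄ * k ^ (2*α - 2/3))) :
    E 1 = (1/2) * U^2 ∧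
    ∀ k : ℝ, 0 < k →
      HasDerivAt (fun k : ℝ => Ck⁻¹ * ε₀ ^ ((1:ℝ)/3) * k ^ ((5:ℝ)/3) * E k)
        (-(2 * ν * k^2 + 2 * α * γ * k ^ (2*α)) * E k) k := by
  have hεp : (0:ℝ) < ε₀ ^ ((1:ℝ)/3) := Real.rpow_pos_of_pos hε _
  have hden : 2 * α - 2/3 ≠ 0 := by
    intro h; apply hα3; linarith
  constructor
  · rw [hE 1]
    simp only [Real.one_rpow, mul_one, hβ₃]
    rw [mul_assoc, mul_assoc, ← Real.exp_add, ← Real.exp_add,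
      show β₂ + β₄ + (-β₂ + -β₄) = 0 by ring, Real.exp_zero, mul_one]
  · intro k hk
    have hne := hk.ne'
    have hX : HasDerivAt (fun x : ℝ => Real.exp (-β₂ * x ^ ((4:ℝ)/3)))
        (Real.exp (-β₂ * k ^ ((4:ℝ)/3)) * (-β₂ * ((4:ℝ)/3 * k ^ ((4:ℝ)/3 - 1)))) k := by
      exact ((Real.hasDerivAt_rpow_const (p := (4:ℝ)/3) (Or.inl hne)).const_mul (-β₂)).exp
    have hY : HasDerivAt (fun x : ℝ => Real.exp (-β₄ * x ^ (2*α - 2/3)))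
        (Real.exp (-β₄ * k ^ (2*α - 2/3)) * (-β₄ * ((2*α - 2/3) * k ^ (2*α - 2/3 - 1)))) k := by
      exact ((Real.hasDerivAt_rpow_const (p := 2*α - 2/3) (Or.inl hne)).const_mul (-β₄)).exp
    have hF := ((hX.mul hY).const_mul (Ck⁻¹ * ε₀ ^ ((1:ℝ)/3) * ((1/2) * U^2 * Real.exp β₃)))
    have heq : (fun k : ℝ => Ck⁻¹ * ε₀ ^ ((1:ℝ)/3) * k ^ ((5:ℝ)/3) * E k)
        =ᶠ[nhds k] (fun x : ℝ => Ck⁻¹ * ε₀ ^ ((1:ℝ)/3) * ((1/2) * U^2 * Real.exp β₃) *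
          (Real.exp (-β₂ * x ^ ((4:ℝ)/3)) * Real.exp (-β₄ * x ^ (2*α - 2/3)))) := by
      filter_upwards [Ioi_mem_nhds hk] with x hx
      have hx0 : (0:ℝ) < x := hx
      rw [hE x]
      have h5 : x ^ ((5:ℝ)/3) * x ^ (-(5:ℝ)/3) = 1 := by
        rw [← Real.rpow_add hx0]; norm_num
      linear_combination (Ck⁻¹ * ε₀ ^ ((1:ℝ)/3) * ((1:ℝ)/2 * U^2 * Real.exp β₃) *
        Real.exp (-β₂ * x ^ ((4:ℝ)/3)) * Real.exp (-β₄ * x ^ (2*α - 2/3))) * h5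
    have hG := hF.congr_of_eventuallyEq heq
    refine hG.congr_deriv ?_
    symm
    rw [hE k]
    have h1 : k ^ ((4:ℝ)/3 - 1) = k^2 * k ^ (-(5:ℝ)/3) := by
      rw [← Real.rpow_natCast k 2, ← Real.rpow_add hk]; norm_num
    have h2 : k ^ (2*α - 2/3 - 1) = k ^ (2*α) * k ^ (-(5:ℝ)/3) := by
      rw [← Real.rpow_add hk]; ring_nf
    rw [h1, h2]
    have hA : β₂ * ((4:ℝ)/3) * ε₀ ^ ((1:ℝ)/3) = 2 * Ck * ν := by
      rw [hβ₂]; field_simp; ring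
    have hB : β₄ * (2*α - 2/3) * ε₀ ^ ((1:ℝ)/3) = 2 * α * Ck * γ := by
      have hcd : (2*α - 2/3) * ε₀ ^ ((1:ℝ)/3) ≠ 0 := mul_ne_zero hden hεp.ne'
      rw [hβ₄, div_mul_eq_mul_div, div_mul_eq_mul_div, div_eq_iff hcd]
      ring
    have hCk' : Ck⁻¹ * Ck = 1 := inv_mul_cancel₀ hCk.ne'
    linear_combination
      (Ck⁻¹ * ((1:ℝ)/2 * U^2 * Real.exp β₃) * k ^ (-(5:ℝ)/3) *
        Real.exp (-β₂ * k ^ ((4:ℝ)/3)) * Real.exp (-β₄ * k ^ (2*α - 2/3)) * k^2) * hA +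
      (Ck⁻¹ * ((1:ℝ)/2 * U^2 * Real.exp β₃) * k ^ (-(5:ℝ)/3) *
        Real.exp (-β₂ * k ^ ((4:ℝ)/3)) * Real.exp (-β₄ * k ^ (2*α - 2/3)) * k ^ (2*α)) * hB +
      ((2*ν*k^2 + 2*α*γ*k ^ (2*α)) * ((1:ℝ)/2 * U^2 * Real.exp β₃) * k ^ (-(5:ℝ)/3) *
        Real.exp (-β₂ * k ^ ((4:ℝ)/3)) * Real.exp (-β₄ * k ^ (2*α - 2/3))) * hCk'
end

section
/- Let U, γ, C_k, ε₀ be strictly positive real numbers and set β₁ = 2C_kγ/(3ε₀^{1/3}). Define E : ℝ → ℝ by E(k) = (1/2)U² · k^{-(5/3+β₁)} (real power). Then E(1) = (1/2)U², and for every k > 0 the function k ↦ C_k^{-1} ε₀^{1/3} k^{5/3} E(k) has derivative at k equal to -(2/3)γ k^{2/3} · E(k). Thus in the inertial range (viscous term ν = 0) with fractional exponent α = 1/3, the energy spectrum is an exact power law whose exponent -(5/3 + β₁) carries the correction β₁ to the Kolmogorov -5/3 scaling exponent. -/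
/-- In the inertial range (ν = 0) with α = 1/3, the spectrum E(k) = (1/2)U² k^{-(5/3+β₁)}
satisfies E(1) = U²/2 and solves d/dk (C_k⁻¹ ε₀^{1/3} k^{5/3} E(k)) + (2/3)γ k^{2/3} E(k) = 0
for k > 0, exhibiting a correction β₁ to the Kolmogorov -5/3 exponent. -/
theorem pao_inertial_range_alpha_third (U γ Ck ε₀ : ℝ)
    (hU : 0 < U) (hγ : 0 < γ) (hCk : 0 < Ck) (hε : 0 < ε₀)
    (β₁ : ℝ) (hβ₁ : β₁ = 2 * Ck * γ / (3 * ε₀ ^ ((1:ℝ)/3)))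
    (E : ℝ → ℝ)
    (hE : ∀ k : ℝ, E k = (1/2) * U^2 * k ^ (-(5/3 + β₁))) :
    E 1 = (1/2) * U^2 ∧
    ∀ k : ℝ, 0 < k →
      HasDerivAt (fun k : ℝ => Ck⁻¹ * ε₀ ^ ((1:ℝ)/3) * k ^ ((5:ℝ)/3) * E k)
        (-((2/3) * γ * k ^ ((2:ℝ)/3)) * E k) k := by
  have hεp : (0:ℝ) < ε₀ ^ ((1:ℝ)/3) := Real.rpow_pos_of_pos hε _
  refine ⟨by rw [hE]; simp, ?_⟩
  intro k hk
  set c : ℝ := Ck⁻¹ * ε₀ ^ ((1:ℝ)/3) * ((1/2) * U^2) with hc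
  have key : ∀ x : ℝ, 0 < x →
      Ck⁻¹ * ε₀ ^ ((1:ℝ)/3) * x ^ ((5:ℝ)/3) * E x = c * x ^ (-β₁) := by
    intro x hx
    rw [hE]
    have : x ^ ((5:ℝ)/3) * x ^ (-(5/3 + β₁)) = x ^ (-β₁) := by
      rw [← Real.rpow_add hx]; ring_nf
    rw [hc, ← this]; ring
  have hd : HasDerivAt (fun x : ℝ => c * x ^ (-β₁)) (c * (-β₁ * k ^ (-β₁ - 1))) k :=
    (Real.hasDerivAt_rpow_const (Or.inl hk.ne')).const_mul c
  have heq : c * (-β₁ * k ^ (-β₁ - 1)) = -((2/3) * γ * k ^ ((2:ℝ)/3)) * E k := by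
    rw [hE]
    have hk1 : k ^ ((2:ℝ)/3) * k ^ (-(5/3 + β₁)) = k ^ (-β₁ - 1) := by
      rw [← Real.rpow_add hk]; ring_nf
    have hcoef : c * (-β₁) = -((2/3) * γ) * ((1/2) * U^2) := by
      rw [hc, hβ₁]
      field_simp
    calc c * (-β₁ * k ^ (-β₁ - 1)) = (c * (-β₁)) * k ^ (-β₁ - 1) := by ring
      _ = -((2/3) * γ) * ((1/2) * U^2) * (k ^ ((2:ℝ)/3) * k ^ (-(5/3 + β₁))) := by
          rw [hcoef, hk1]
      _ = -(2/3 * γ * k ^ ((2:ℝ)/3)) * ((1/2) * U^2 * k ^ (-(5/3 + β₁))) := by ring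
  refine HasDerivAt.congr_of_eventuallyEq (heq ▸ hd) ?_
  filter_upwards [eventually_gt_nhds hk] with x hx using key x hx
end
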